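/- Let ★ be a semistar operation on an integral domain D and F a nonzero finitely generated fractional ideal. Then F is ★-a.b. if and only if ((FH)★ : F★) = H★ for every nonzero D-submodule H of the quotient field. -/

import Mathlib

variable (D : Type*) [CommRing D] [IsDomain D]

/-- A semistar operation on an integral domain `D`. -/
def IsSemistarOp (s : Submodule D (FractionRing D) → Submodule D (FractionRing D)) : Prop :=
  (∀ z : FractionRing D, z ≠ 0 → ∀ E : Submodule D (FractionRing D), E ≠ ⊥ →
      s (Submodule.span D {z} * E) = Submodule.span D {z} * s E) ∧
  (∀ E F : Submodule D (FractionRing D), E ≠ ⊥ → F ≠ ⊥ → E ≤ F → s E ≤ s F) ∧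
  (∀ E : Submodule D (FractionRing D), E ≠ ⊥ → E ≤ s E) ∧
  (∀ E : Submodule D (FractionRing D), E ≠ ⊥ → s (s E) = s E)

/-- `F` is `★`-a.b.: `(FG)★ ⊆ (FH)★` implies `G★ ⊆ H★` for all nonzero
`D`-submodules `G`, `H` of `K`. -/
def IsStarAb (s : Submodule D (FractionRing D) → Submodule D (FractionRing D))
    (F : Submodule D (FractionRing D)) : Prop :=
  ∀ G H : Submodule D (FractionRing D), G ≠ ⊥ → H ≠ ⊥ →
    s (F * G) ≤ s (F * H) → s G ≤ s H

lemma aux_mul_ne_bot {E G : Submodule D (FractionRing D)} (hE : E ≠ ⊥) (hG : G ≠ ⊥) :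
    E * G ≠ ⊥ := by
  rw [Submodule.ne_bot_iff] at hE hG ⊢
  obtain ⟨x, hx, hx0⟩ := hE
  obtain ⟨y, hy, hy0⟩ := hG
  exact ⟨x * y, Submodule.mul_mem_mul hx hy, mul_ne_zero hx0 hy0⟩

lemma aux_s_ne_bot (s : Submodule D (FractionRing D) → Submodule D (FractionRing D))
    (hs : IsSemistarOp D s) {E : Submodule D (FractionRing D)} (hE : E ≠ ⊥) : s E ≠ ⊥ := by
  intro hb
  exact hE (le_bot_iff.mp (hb ▸ hs.2.2.1 E hE))

lemma aux_star_mul_le (s : Submodule D (FractionRing D) → Submodule D (FractionRing D))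
    (hs : IsSemistarOp D s) {E G : Submodule D (FractionRing D)}
    (hE : E ≠ ⊥) (hG : G ≠ ⊥) : s E * s G ≤ s (E * G) := by
  obtain ⟨h1, h2, h3, h4⟩ := hs
  have hEG : E * G ≠ ⊥ := aux_mul_ne_bot D hE hG
  have hsEG : s (E * G) ≠ ⊥ := aux_s_ne_bot D s ⟨h1, h2, h3, h4⟩ hEG
  have step1 : E * s G ≤ s (E * G) := by
    rw [Submodule.mul_le]
    intro e he x hx
    by_cases h0 : e = 0
    · simpa [h0] using (s (E * G)).zero_mem
    · have hmem : e * x ∈ Submodule.span D {e} * s G :=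
        Submodule.mul_mem_mul (Submodule.mem_span_singleton_self e) hx
      rw [← h1 e h0 G hG] at hmem
      have hspan : Submodule.span D {e} ≠ ⊥ := fun hb => h0 (Submodule.span_singleton_eq_bot.mp hb)
      have hle : Submodule.span D {e} * G ≤ E * G :=
        mul_le_mul' ((Submodule.span_singleton_le_iff_mem e E).2 he) le_rfl
      exact h2 _ _ (aux_mul_ne_bot D hspan hG) hEG hle hmem
  rw [Submodule.mul_le]
  intro y hy x hx
  by_cases h0 : x = 0
  · simpa [h0] using (s (E * G)).zero_mem
  · have hmem : x * y ∈ Submodule.span D {x} * s E :=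
      Submodule.mul_mem_mul (Submodule.mem_span_singleton_self x) hy
    rw [← h1 x h0 E hE] at hmem
    have hspan : Submodule.span D {x} ≠ ⊥ := fun hb => h0 (Submodule.span_singleton_eq_bot.mp hb)
    have hle : Submodule.span D {x} * E ≤ s (E * G) := by
      refine le_trans ?_ step1
      rw [mul_comm (Submodule.span D {x}) E]
      exact mul_le_mul' le_rfl ((Submodule.span_singleton_le_iff_mem x (s G)).2 hx)
    have hfin := h2 _ _ (aux_mul_ne_bot D hspan hE) hsEG hle
    rw [h4 _ hEG] at hfin
    rw [mul_comm y x]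
    exact hfin hmem

/-- A nonzero finitely generated fractional ideal `F` is `★`-a.b. iff
`((FH)★ : F★) = H★` for every nonzero `D`-submodule `H` of `K`. -/
theorem starAb_iff_colon (s : Submodule D (FractionRing D) → Submodule D (FractionRing D))
    (hs : IsSemistarOp D s)
    (F : Submodule D (FractionRing D)) (hF : F ≠ ⊥) (hfg : F.FG) :
    IsStarAb D s F ↔
      ∀ H : Submodule D (FractionRing D), H ≠ ⊥ → s (F * H) / s F = s H := by
  obtain ⟨h1, h2, h3, h4⟩ := hs
  have hs' : IsSemistarOp D s := ⟨h1, h2, h3, h4⟩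
  constructor
  · intro hab H hH
    have hFH : F * H ≠ ⊥ := aux_mul_ne_bot D hF hH
    have hsFH : s (F * H) ≠ ⊥ := aux_s_ne_bot D s hs' hFH
    have hsH : s H ≠ ⊥ := aux_s_ne_bot D s hs' hH
    -- `⊇` direction
    have key : s F * s H ≤ s (F * H) := aux_star_mul_le D s hs' hF hH
    have hge : s H ≤ s (F * H) / s F := by
      intro x hx
      rw [Submodule.mem_div_iff_forall_mul_mem]
      intro b hb
      rw [mul_comm x b]
      exact key (Submodule.mul_mem_mul hb hx)
    refine le_antisymm ?_ hge
    -- `⊆` direction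
    set T := s (F * H) / s F with hT
    have hTne : T ≠ ⊥ := fun hb => hsH (le_bot_iff.mp (hb ▸ hge))
    have hFT : F * T ≤ s (F * H) := by
      rw [Submodule.mul_le]
      intro f hf x hx
      have := Submodule.mem_div_iff_forall_mul_mem.mp hx f (h3 F hF hf)
      rwa [mul_comm x f] at this
    have hle : s (F * T) ≤ s (F * H) := by
      have := h2 _ _ (aux_mul_ne_bot D hF hTne) hsFH hFT
      rwa [h4 _ hFH] at this
    have := hab T H hTne hH hle
    exact le_trans (h3 T hTne) this
  · intro h G H hG hH hle
    rw [← h G hG, ← h H hH]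
    intro x hx
    rw [Submodule.mem_div_iff_forall_mul_mem] at hx ⊢
    exact fun b hb => hle (hx b hb)
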